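/- arXiv:2305.16910 — 8 statements merged into one kernel-verified Lean document; each statement's English description precedes it below -/
import Mathlib

section
/- If a sequence of functions f_k : ℂ → ℂ, each of which is either holomorphic or antiholomorphic, converges locally uniformly to a function f : ℂ → ℂ, then f is holomorphic or antiholomorphic. -/
open Filter

/-! Infinitely many `f k` are holomorphic or infinitely many are antiholomorphic. Along that
subsequence the convergence is still locally uniform (after conjugating, in the second case,
since conjugation is an isometry), and a locally uniform limit of holomorphic functions is
holomorphic. -/

theorem TendstoLocallyUniformly.filter_mono {ι α β : Type*} [TopologicalSpace α]
    [UniformSpace β] {F : ι → α → β} {f : α → β} {p q : Filter ι}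
    (h : TendstoLocallyUniformly F f p) (hqp : q ≤ p) : TendstoLocallyUniformly F f q :=
  fun u hu x => (h u hu x).imp fun _ ⟨hx, hev⟩ => ⟨hx, hev.filter_mono hqp⟩

theorem TendstoLocallyUniformly.differentiable_of_frequently {ι E : Type*}
    [NormedAddCommGroup E] [NormedSpace ℂ E] [CompleteSpace E] {F : ι → ℂ → E} {f : ℂ → E}
    {p : Filter ι} (h : TendstoLocallyUniformly F f p)
    (hF : ∃ᶠ n in p, Differentiable ℂ (F n)) : Differentiable ℂ f := by
  have : (p ⊓ 𝓟 {n | Differentiable ℂ (F n)}).NeBot := frequently_iff_neBot.1 hF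
  have hlim : TendstoLocallyUniformlyOn F f (p ⊓ 𝓟 {n | Differentiable ℂ (F n)}) Set.univ :=
    tendstoLocallyUniformlyOn_univ.2 (h.filter_mono inf_le_left)
  have hdiff : ∀ᶠ n in p ⊓ 𝓟 {n | Differentiable ℂ (F n)}, DifferentiableOn ℂ (F n) Set.univ :=
    eventually_inf_principal.2 (Eventually.of_forall fun _ hn => hn.differentiableOn)
  exact differentiableOn_univ.1 (hlim.differentiableOn hdiff isOpen_univ)

theorem TendstoLocallyUniformly.conj {ι α : Type*} [TopologicalSpace α] {F : ι → α → ℂ}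
    {f : α → ℂ} {p : Filter ι} (h : TendstoLocallyUniformly F f p) :
    TendstoLocallyUniformly (fun n z => starRingEnd ℂ (F n z)) (fun z => starRingEnd ℂ (f z)) p :=
  Complex.conjLIE.isometry.uniformContinuous.comp_tendstoLocallyUniformly h

/-- A locally uniform limit of functions ℂ → ℂ, each holomorphic or
antiholomorphic, is holomorphic or antiholomorphic. -/
theorem holomorphic_or_antiholomorphic_of_tendstoLocallyUniformly
    (f : ℕ → ℂ → ℂ) (g : ℂ → ℂ)
    (hf : ∀ k, Differentiable ℂ (f k) ∨
      Differentiable ℂ (fun z => starRingEnd ℂ (f k z)))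
    (hconv : ∀ K : Set ℂ, IsCompact K → TendstoUniformlyOn f g Filter.atTop K) :
    Differentiable ℂ g ∨ Differentiable ℂ (fun z => starRingEnd ℂ (g z)) := by
  have hlim : TendstoLocallyUniformly f g atTop :=
    tendstoLocallyUniformly_iff_forall_isCompact.2 hconv
  by_cases hhol : ∃ᶠ k in atTop, Differentiable ℂ (f k)
  · exact Or.inl (hlim.differentiable_of_frequently hhol)
  · have hanti : ∀ᶠ k in atTop, Differentiable ℂ (fun z => starRingEnd ℂ (f k z)) :=
      (not_frequently.1 hhol).mono fun k hk => (hf k).resolve_left hk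
    exact Or.inr (hlim.conj.differentiable_of_frequently hanti.frequently)
end

section
/- Let ρ : ℂ → ℂ be continuous, real differentiable at some z₀ ∈ ℂ with ∂_w ρ(z₀) ≠ 0 and ∂̄_w ρ(z₀) = 0. Then for every compact set K ⊆ ℂ and every ε > 0 there exist affine maps φ, ψ : ℂ → ℂ (i.e., of the form z ↦ az + b with a, b ∈ ℂ) such that sup_{z ∈ K} |ψ(ρ(φ(z))) − z| < ε. -/
/-!
Since `∂̄ρ(z₀) = 0`, the real derivative of `ρ` at `z₀` is multiplication by `A = ∂ρ(z₀)`, so `ρ`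
is complex differentiable there. Zooming in at `z₀`, the rescalings `(ρ(z₀ + t z) - ρ(z₀)) / t`
converge to `z ↦ A z` uniformly on bounded sets as `t → 0`; dividing by `A ≠ 0` turns one of
them into an affine-sandwiched copy of `ρ` that is uniformly `ε`-close to the identity on `K`.
-/

/-- Wirtinger derivative ∂_w f = (1/2)(∂f/∂x − i ∂f/∂y). -/
noncomputable def wirt (f : ℂ → ℂ) (z : ℂ) : ℂ :=
  (1/2) * (fderiv ℝ f z 1 - Complex.I * fderiv ℝ f z Complex.I)

/-- Conjugate Wirtinger derivative ∂̄_w f = (1/2)(∂f/∂x + i ∂f/∂y). -/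
noncomputable def awirt (f : ℂ → ℂ) (z : ℂ) : ℂ :=
  (1/2) * (fderiv ℝ f z 1 + Complex.I * fderiv ℝ f z Complex.I)

open Filter Topology

theorem HasDerivAt.tendstoUniformlyOn_rescale {𝕜 F : Type*} [NontriviallyNormedField 𝕜]
    [NormedAddCommGroup F] [NormedSpace 𝕜 F] {f : 𝕜 → F} {f' : F} {x : 𝕜}
    (hf : HasDerivAt f f' x) {K : Set 𝕜} (hK : Bornology.IsBounded K) :
    TendstoUniformlyOn (fun t z => t⁻¹ • (f (x + t * z) - f x)) (fun z => z • f') (𝓝[≠] 0) K := by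
  obtain ⟨R, hR0, hR⟩ := hK.exists_pos_norm_le
  rw [Metric.tendstoUniformlyOn_iff]
  intro ε hε
  have hη : 0 < ε / (2 * R) := by positivity
  obtain ⟨δ, hδ, hsmall⟩ := Metric.eventually_nhds_iff.mp
    ((hasDerivAt_iff_isLittleO_nhds_zero.mp hf).def hη)
  have ht : Metric.ball (0 : 𝕜) (δ / R) \ {0} ∈ 𝓝[≠] 0 :=
    sdiff_mem_nhdsWithin_compl (Metric.ball_mem_nhds _ (by positivity)) _
  filter_upwards [ht] with t ⟨htδ, ht0⟩ z hz
  rw [Metric.mem_ball, dist_zero_right, lt_div_iff₀ hR0] at htδ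
  have ht0 : t ≠ 0 := ht0
  have htz : ‖t * z‖ ≤ ‖t‖ * R := by rw [norm_mul]; gcongr; exact hR z hz
  have hrem := hsmall (by rw [dist_zero_right]; exact htz.trans_lt htδ)
  calc dist (z • f') (t⁻¹ • (f (x + t * z) - f x))
      = ‖t‖⁻¹ * ‖f (x + t * z) - f x - (t * z) • f'‖ := by
        rw [dist_comm, dist_eq_norm, ← norm_inv, ← norm_smul, smul_sub t⁻¹ (_ - _), mul_smul,
          inv_smul_smul₀ ht0]
    _ ≤ ‖t‖⁻¹ * (ε / (2 * R) * (‖t‖ * R)) := by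
        gcongr
        exact hrem.trans (by gcongr)
    _ = ε / 2 := by field_simp
    _ < ε := half_lt_self hε

theorem fderiv_apply_eq_mul_wirt_of_awirt_eq_zero {f : ℂ → ℂ} {z : ℂ} (h : awirt f z = 0)
    (v : ℂ) : fderiv ℝ f z v = v * wirt f z := by
  set L := fderiv ℝ f z
  have hLI : L Complex.I = Complex.I * L 1 := by
    unfold awirt at h
    linear_combination (-2 * Complex.I) * h + L Complex.I * Complex.I_mul_I
  have hv : L v = v.re • L 1 + v.im • L Complex.I := by
    rw [← map_smul, ← map_smul, ← map_add]
    congr 1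
    simp [Complex.real_smul]
  unfold wirt
  rw [hv, hLI]
  simp only [Complex.real_smul]
  linear_combination L 1 * Complex.re_add_im v + (v * L 1 / 2) * Complex.I_mul_I

theorem hasDerivAt_wirt_of_awirt_eq_zero {f : ℂ → ℂ} {z : ℂ} (hf : DifferentiableAt ℝ f z)
    (h : awirt f z = 0) : HasDerivAt f (wirt f z) z :=
  hasFDerivAt_of_restrictScalars ℝ hf.hasFDerivAt <| ContinuousLinearMap.ext fun v => by
    simp [fderiv_apply_eq_mul_wirt_of_awirt_eq_zero h]

theorem approx_identity_of_wirt_ne_zero_general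
    (ρ : ℂ → ℂ) (z₀ : ℂ) (hρd : DifferentiableAt ℝ ρ z₀)
    (h1 : wirt ρ z₀ ≠ 0) (h2 : awirt ρ z₀ = 0)
    (K : Set ℂ) (hK : IsCompact K) (ε : ℝ) (hε : 0 < ε) :
    ∃ a b c d : ℂ, ∀ z ∈ K, ‖c * ρ (a * z + b) + d - z‖ < ε := by
  set A := wirt ρ z₀
  have hunif := Metric.tendstoUniformlyOn_iff.mp
    ((hasDerivAt_wirt_of_awirt_eq_zero hρd h2).tendstoUniformlyOn_rescale hK.isBounded)
    (ε * ‖A‖) (by positivity)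
  obtain ⟨t, hclose, ht0⟩ := (hunif.and self_mem_nhdsWithin).exists
  have ht0 : t ≠ 0 := ht0
  refine ⟨t, z₀, (t * A)⁻¹, -ρ z₀ * (t * A)⁻¹, fun z hz => ?_⟩
  have hrescale : (t * A)⁻¹ * ρ (t * z + z₀) + -ρ z₀ * (t * A)⁻¹ - z
      = A⁻¹ * (t⁻¹ • (ρ (z₀ + t * z) - ρ z₀) - z • A) := by
    rw [smul_eq_mul, smul_eq_mul, add_comm (t * z)]
    field_simp
    ring
  rw [hrescale, norm_mul, norm_inv, inv_mul_lt_iff₀ (norm_pos_iff.mpr h1), ← dist_eq_norm,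
    dist_comm, mul_comm ‖A‖]
  exact hclose z hz

/-- if ∂_w ρ(z₀) ≠ 0 and ∂̄_w ρ(z₀) = 0, then the identity can be uniformly
approximated on compact sets by ψ ∘ ρ ∘ φ with ℂ-affine φ, ψ. -/
theorem approx_identity_of_wirt_ne_zero
    (ρ : ℂ → ℂ) (hρc : Continuous ρ) (z₀ : ℂ) (hρd : DifferentiableAt ℝ ρ z₀)
    (h1 : wirt ρ z₀ ≠ 0) (h2 : awirt ρ z₀ = 0)
    (K : Set ℂ) (hK : IsCompact K) (ε : ℝ) (hε : 0 < ε) :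
    ∃ a b c d : ℂ, ∀ z ∈ K, ‖c * ρ (a * z + b) + d - z‖ < ε :=
  approx_identity_of_wirt_ne_zero_general ρ z₀ hρd h1 h2 K hK ε hε
end

section
/- Let ρ : ℂ → ℂ be continuous, real differentiable at some z₀ ∈ ℂ with ∂_w ρ(z₀) = 0 and ∂̄_w ρ(z₀) ≠ 0. Then for every compact set K ⊆ ℂ and every ε > 0 there exist ℂ-affine maps φ, ψ : ℂ → ℂ such that sup_{z ∈ K} |ψ(ρ(φ(z))) − conj(z)| < ε. -/
/-! Since `∂_w ρ(z₀) = 0`, the real derivative of `ρ` at `z₀` is `h ↦ ∂̄_w ρ(z₀) · conj h`.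
Blowing up `ρ` at `z₀`, the difference quotients `(ρ(z₀ + t z) - ρ(z₀)) / t` converge to this
derivative uniformly on bounded sets as `t → 0`; dividing by `∂̄_w ρ(z₀) ≠ 0` then approximates
`conj` on `K`. -/

open Complex ComplexConjugate Filter Topology

theorem ContinuousLinearMap.apply_eq_mul_add_mul_conj (L : ℂ →L[ℝ] ℂ) (h : ℂ) :
    L h = (1/2) * (L 1 - I * L I) * h + (1/2) * (L 1 + I * L I) * conj h := by
  have hL : L h = h.re * L 1 + h.im * L I := by
    have hsplit : h = h.re • (1 : ℂ) + h.im • I := by simp [real_smul]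
    conv_lhs => rw [hsplit]
    rw [map_add, map_smul, map_smul, real_smul, real_smul]
  have hconj : conj h = h.re - h.im * I := by apply Complex.ext <;> simp
  rw [hL, hconj]
  linear_combination (1/2) * (L 1 - I * L I) * re_add_im h + (h.im * L I) * I_sq

theorem fderiv_apply_eq_wirt_mul_add_awirt_mul_conj (f : ℂ → ℂ) (z h : ℂ) :
    fderiv ℝ f z h = wirt f z * h + awirt f z * conj h :=
  (fderiv ℝ f z).apply_eq_mul_add_mul_conj h

theorem HasFDerivAt.tendstoUniformlyOn_inv_smul_sub {𝕜 E F : Type*} [NontriviallyNormedField 𝕜]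
    [NormedAddCommGroup E] [NormedSpace 𝕜 E] [NormedAddCommGroup F] [NormedSpace 𝕜 F]
    {f : E → F} {L : E →L[𝕜] F} {x : E} (hf : HasFDerivAt f L x) {s : Set E}
    (hs : Bornology.IsBounded s) :
    TendstoUniformlyOn (fun (t : 𝕜) z => t⁻¹ • (f (x + t • z) - f x)) L (𝓝[≠] 0) s := by
  obtain ⟨R, hR₀, hR⟩ := hs.exists_pos_norm_le
  rw [Metric.tendstoUniformlyOn_iff]
  intro ε hε
  have hη : 0 < ε / (2 * R) := by positivity
  obtain ⟨δ, hδ, hlo⟩ := Metric.eventually_nhds_iff.mp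
    ((hasFDerivAt_iff_isLittleO_nhds_zero.mp hf).def hη)
  filter_upwards [mem_nhdsWithin_of_mem_nhds (Metric.ball_mem_nhds (0 : 𝕜) (div_pos hδ hR₀)),
    self_mem_nhdsWithin] with t htδ ht₀ z hz
  rw [mem_ball_zero_iff] at htδ
  have htz : ‖t • z‖ ≤ ‖t‖ * R := by
    rw [norm_smul]; exact mul_le_mul_of_nonneg_left (hR z hz) (norm_nonneg t)
  have hrem := hlo (show dist (t • z) 0 < δ by
    rw [dist_zero_right]
    calc ‖t • z‖ ≤ ‖t‖ * R := htz
      _ < δ / R * R := by gcongr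
      _ = δ := by field_simp)
  have hdiff : L z - t⁻¹ • (f (x + t • z) - f x) = -t⁻¹ • (f (x + t • z) - f x - L (t • z)) := by
    rw [map_smul, neg_smul, smul_sub (t⁻¹) _ (t • L z), smul_smul, inv_mul_cancel₀ ht₀, one_smul]
    abel
  rw [dist_eq_norm, hdiff, norm_smul, norm_neg, norm_inv]
  calc ‖t‖⁻¹ * ‖f (x + t • z) - f x - L (t • z)‖ ≤ ‖t‖⁻¹ * (ε / (2 * R) * (‖t‖ * R)) := by
        gcongr; exact hrem.trans (by gcongr)
    _ = ε / 2 := by field_simp [norm_ne_zero_iff.mpr ht₀]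
    _ < ε := by linarith

theorem approx_conj_of_awirt_ne_zero_general
    (ρ : ℂ → ℂ) (z₀ : ℂ) (hρd : DifferentiableAt ℝ ρ z₀)
    (h1 : wirt ρ z₀ = 0) (h2 : awirt ρ z₀ ≠ 0)
    (K : Set ℂ) (hK : IsCompact K) (ε : ℝ) (hε : 0 < ε) :
    ∃ a b c d : ℂ, ∀ z ∈ K,
      ‖c * ρ (a * z + b) + d - starRingEnd ℂ z‖ < ε := by
  set A := awirt ρ z₀
  have hderiv : ∀ h, fderiv ℝ ρ z₀ h = A * conj h := fun h => by
    rw [fderiv_apply_eq_wirt_mul_add_awirt_mul_conj, h1, zero_mul, zero_add]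
  obtain ⟨t, hclose, ht₀⟩ := (Metric.tendstoUniformlyOn_iff.mp
    (hρd.hasFDerivAt.tendstoUniformlyOn_inv_smul_sub hK.isBounded) (ε * ‖A‖) (by positivity)
    |>.and self_mem_nhdsWithin).exists
  refine ⟨t, z₀, (t * A)⁻¹, -(t * A)⁻¹ * ρ z₀, fun z hz => ?_⟩
  have hrescale : (t * A)⁻¹ * ρ (t * z + z₀) + -(t * A)⁻¹ * ρ z₀ - conj z
      = -A⁻¹ * (fderiv ℝ ρ z₀ z - t⁻¹ • (ρ (z₀ + t • z) - ρ z₀)) := by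
    rw [hderiv, real_smul, real_smul, ofReal_inv, add_comm z₀]
    field_simp
    ring
  calc _ = ‖A‖⁻¹ * dist (fderiv ℝ ρ z₀ z) (t⁻¹ • (ρ (z₀ + t • z) - ρ z₀)) := by
        rw [hrescale, norm_mul, norm_neg, norm_inv, dist_eq_norm]
    _ < ‖A‖⁻¹ * (ε * ‖A‖) := by gcongr; exact hclose z hz
    _ = ε := by field_simp [norm_ne_zero_iff.mpr h2]

/-- if ∂_w ρ(z₀) = 0 and ∂̄_w ρ(z₀) ≠ 0, then complex conjugation can be
uniformly approximated on compact sets by ψ ∘ ρ ∘ φ with ℂ-affine φ, ψ. -/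
theorem approx_conj_of_awirt_ne_zero
    (ρ : ℂ → ℂ) (hρc : Continuous ρ) (z₀ : ℂ) (hρd : DifferentiableAt ℝ ρ z₀)
    (h1 : wirt ρ z₀ = 0) (h2 : awirt ρ z₀ ≠ 0)
    (K : Set ℂ) (hK : IsCompact K) (ε : ℝ) (hε : 0 < ε) :
    ∃ a b c d : ℂ, ∀ z ∈ K,
      ‖c * ρ (a * z + b) + d - starRingEnd ℂ z‖ < ε :=
  approx_conj_of_awirt_ne_zero_general ρ z₀ hρd h1 h2 K hK ε hε
end

section
/- Let ρ : ℂ → ℂ be twice continuously real-differentiable and z₀ ∈ ℂ with ∂_w ∂̄_w ρ(z₀) ≠ 0. Then the functions f_h(z) = [ρ(z₀+hz) + ρ(z₀−hz) + ρ(z₀+ihz) + ρ(z₀−ihz) − 4ρ(z₀)] / (4h²·∂_w ∂̄_w ρ(z₀)) converge to z ↦ z·conj(z) = |z|² uniformly on every compact subset of ℂ as h → 0⁺. -/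
open Complex Filter Asymptotics Topology

section Taylor

variable {E F : Type*} [NormedAddCommGroup E] [NormedSpace ℝ E] [NormedAddCommGroup F]
  [NormedSpace ℝ F]

noncomputable def secondTaylorRemainder (f : E → F) (x w : E) : F :=
  f (x + w) - f x - fderiv ℝ f x w - (1 / 2 : ℝ) • fderiv ℝ (fderiv ℝ f) x w w

theorem secondTaylorRemainder_add_neg (f : E → F) (x w : E) :
    secondTaylorRemainder f x w + secondTaylorRemainder f x (-w)
      = f (x + w) + f (x - w) - (2 : ℝ) • f x - fderiv ℝ (fderiv ℝ f) x w w := by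
  simp only [secondTaylorRemainder, map_neg, neg_apply, neg_neg, ← sub_eq_add_neg]
  module

theorem ContDiffAt.hasFDerivAt_secondTaylorRemainder {f : E → F} {x w : E}
    (hf : ContDiffAt ℝ 2 f x) (hw : DifferentiableAt ℝ f (x + w)) :
    HasFDerivAt (secondTaylorRemainder f x)
      (fderiv ℝ f (x + w) - fderiv ℝ f x - fderiv ℝ (fderiv ℝ f) x w) w := by
  set B := fderiv ℝ (fderiv ℝ f) x
  have hsymm : ∀ v, B v w = B w v := fun v => (hf.isSymmSndFDerivAt (by simp)).eq v w
  have hquad : HasFDerivAt (fun v => B v v) (B w + B.flip w) w :=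
    B.hasFDerivAt.clm_apply (hasFDerivAt_id w)
  have hshift : HasFDerivAt (fun v => f (x + v)) (fderiv ℝ f (x + w)) w :=
    (hasFDerivAt_comp_add_left x).2 hw.hasFDerivAt
  refine (((hshift.sub_const (f x)).sub (fderiv ℝ f x).hasFDerivAt).sub
    (hquad.const_smul (1 / 2 : ℝ))).congr_fderiv ?_
  ext v
  simp only [sub_apply, smul_apply, add_apply, ContinuousLinearMap.flip_apply, hsymm]
  module

theorem ContDiffAt.isLittleO_secondTaylorRemainder {f : E → F} {x : E}
    (hf : ContDiffAt ℝ 2 f x) :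
    secondTaylorRemainder f x =o[𝓝 0] fun w => ‖w‖ ^ 2 := by
  obtain ⟨δ, hδ, hdiff⟩ := Metric.eventually_nhds_iff_ball.1
    ((hf.eventually (by simp)).mono fun y hy => hy.differentiableAt (by simp))
  have hball : Metric.ball (0 : E) δ ∈ 𝓝 0 := Metric.ball_mem_nhds 0 hδ
  have hderiv : ∀ w ∈ Metric.ball (0 : E) δ, HasFDerivWithinAt (secondTaylorRemainder f x)
      (fderiv ℝ f (x + w) - fderiv ℝ f x - fderiv ℝ (fderiv ℝ f) x w) (Metric.ball 0 δ) w :=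
    fun w hw => (hf.hasFDerivAt_secondTaylorRemainder
      (hdiff _ (by simpa [dist_eq_norm] using hw))).hasFDerivWithinAt
  have hderiv_small : (fun w => fderiv ℝ f (x + w) - fderiv ℝ f x - fderiv ℝ (fderiv ℝ f) x w)
      =o[𝓝[Metric.ball 0 δ] 0] fun w => ‖w - 0‖ ^ 1 := by
    rw [nhdsWithin_eq_nhds.2 hball]
    simpa using (hasFDerivAt_iff_isLittleO_nhds_zero.1
      ((hf.fderiv_right le_rfl).differentiableAt one_ne_zero).hasFDerivAt).norm_right
  have hzero : secondTaylorRemainder f x 0 = 0 := by simp [secondTaylorRemainder]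
  simpa [nhdsWithin_eq_nhds.2 hball, hzero] using
    (convex_ball 0 δ).isLittleO_pow_succ (Metric.mem_ball_self hδ) hderiv hderiv_small

end Taylor

section LittleOSq

variable {E F : Type*} [NormedAddCommGroup E] [NormedAddCommGroup F]

theorem Asymptotics.IsLittleO.comp_smul_of_sq {𝕜 : Type*} [NormedField 𝕜] [NormedSpace 𝕜 E]
    {R : E → F} (hR : R =o[𝓝 0] fun w => ‖w‖ ^ 2) (u : 𝕜) :
    (fun w => R (u • w)) =o[𝓝 0] fun w => ‖w‖ ^ 2 := by
  have hu : Tendsto (fun w : E => u • w) (𝓝 0) (𝓝 0) := by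
    simpa using (continuous_const_smul u).tendsto (0 : E)
  refine (hR.comp_tendsto hu).trans_isBigO (IsBigO.of_bound (‖u‖ ^ 2) ?_)
  filter_upwards with w
  simp [norm_smul, mul_pow]

theorem Asymptotics.IsLittleO.tendstoUniformlyOn_inv_sq_smul [NormedSpace ℝ E] [NormedSpace ℝ F]
    {R : E → F} (hR : R =o[𝓝 0] fun w => ‖w‖ ^ 2) {K : Set E} (hK : Bornology.IsBounded K) :
    TendstoUniformlyOn (fun (t : ℝ) z => (t ^ 2)⁻¹ • R (t • z)) 0 (𝓝 0) K := by
  obtain ⟨M, hM⟩ := hK.exists_norm_le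
  rw [Metric.tendstoUniformlyOn_iff]
  intro ε hε
  obtain ⟨δ, hδ, hRδ⟩ :=
    Metric.eventually_nhds_iff.1 (hR.def (c := ε / (M ^ 2 + 1)) (by positivity))
  have hsmall : ∀ᶠ t in 𝓝 (0 : ℝ), |t| * M < δ := by
    have : Tendsto (fun t : ℝ => |t| * M) (𝓝 0) (𝓝 0) :=
      (by fun_prop : Continuous fun t : ℝ => |t| * M).tendsto' 0 0 (by simp)
    exact this.eventually (gt_mem_nhds hδ)
  filter_upwards [hsmall] with t ht z hz
  rcases eq_or_ne t 0 with rfl | ht0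
  · simpa using hε
  have hzM : ‖z‖ ≤ M := hM z hz
  have hbound := hRδ (y := t • z) (by
    rw [dist_zero_right, norm_smul, Real.norm_eq_abs]
    exact lt_of_le_of_lt (by gcongr) ht)
  rw [norm_pow, _root_.norm_norm, norm_smul, Real.norm_eq_abs, mul_pow, sq_abs] at hbound
  rw [Pi.zero_apply, dist_zero_left, norm_smul, norm_inv, norm_pow, Real.norm_eq_abs, sq_abs]
  calc (t ^ 2)⁻¹ * ‖R (t • z)‖ ≤ (t ^ 2)⁻¹ * (ε / (M ^ 2 + 1) * (t ^ 2 * ‖z‖ ^ 2)) := by gcongr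
    _ = ε * (‖z‖ ^ 2 / (M ^ 2 + 1)) := by field_simp
    _ < ε := by
      refine mul_lt_of_lt_one_right hε ((div_lt_one (by positivity)).2 ?_)
      nlinarith [norm_nonneg z]

end LittleOSq

theorem ContinuousLinearMap.apply_self_add_apply_I_mul_self {F : Type*} [NormedAddCommGroup F]
    [NormedSpace ℝ F] (B : ℂ →L[ℝ] ℂ →L[ℝ] F) (z : ℂ) :
    B z z + B (I * z) (I * z) = ‖z‖ ^ 2 • (B 1 1 + B I I) := by
  obtain ⟨x, y, rfl⟩ : ∃ x y : ℝ, z = x • (1 : ℂ) + y • I :=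
    ⟨z.re, z.im, by simp [Complex.real_smul, re_add_im]⟩
  have hIz : I * (x • (1 : ℂ) + y • I) = (-y) • (1 : ℂ) + x • I := by
    apply Complex.ext <;> simp
  have hnorm : ‖x • (1 : ℂ) + y • I‖ ^ 2 = x ^ 2 + y ^ 2 := by
    rw [real_smul, real_smul, mul_one, norm_add_mul_I, Real.sq_sqrt (by positivity)]
  rw [hIz, hnorm]
  simp only [map_add, map_smul, add_apply, smul_apply]
  module

theorem ContDiffAt.fderiv_awirt_apply {ρ : ℂ → ℂ} {z : ℂ} (hρ : ContDiffAt ℝ 2 ρ z) (u : ℂ) :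
    fderiv ℝ (awirt ρ) z u
      = (1 / 2) * (fderiv ℝ (fderiv ℝ ρ) z u 1 + I * fderiv ℝ (fderiv ℝ ρ) z u I) := by
  have hB := ((hρ.fderiv_right le_rfl).differentiableAt one_ne_zero).hasFDerivAt
  have : HasFDerivAt (awirt ρ) _ z := (((hB.clm_apply (hasFDerivAt_const 1 z)).fun_add
    ((hB.clm_apply (hasFDerivAt_const I z)).const_mul I)).const_mul (1 / 2 : ℂ))
  rw [this.fderiv]
  simp [mul_add]

theorem ContDiffAt.four_mul_wirt_awirt {ρ : ℂ → ℂ} {z : ℂ} (hρ : ContDiffAt ℝ 2 ρ z) :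
    4 * wirt (awirt ρ) z = fderiv ℝ (fderiv ℝ ρ) z 1 1 + fderiv ℝ (fderiv ℝ ρ) z I I := by
  have hsymm := (hρ.isSymmSndFDerivAt (by simp)).eq 1 I
  rw [wirt, hρ.fderiv_awirt_apply, hρ.fderiv_awirt_apply, hsymm]
  linear_combination (-(fderiv ℝ (fderiv ℝ ρ) z I I)) * I_mul_I

section FivePoint

variable {F : Type*} [NormedAddCommGroup F] [NormedSpace ℝ F]

def fivePointStencil (f : ℂ → F) (z w : ℂ) : F :=
  f (z + w) + f (z - w) + f (z + I * w) + f (z - I * w) - (4 : ℝ) • f z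

noncomputable def fivePointRemainder (f : ℂ → F) (z w : ℂ) : F :=
  secondTaylorRemainder f z w + secondTaylorRemainder f z (-w)
    + (secondTaylorRemainder f z (I * w) + secondTaylorRemainder f z (-(I * w)))

theorem fivePointStencil_eq (f : ℂ → F) (z w : ℂ) :
    fivePointStencil f z w = ‖w‖ ^ 2 • (fderiv ℝ (fderiv ℝ f) z 1 1 + fderiv ℝ (fderiv ℝ f) z I I)
      + fivePointRemainder f z w := by
  rw [← ContinuousLinearMap.apply_self_add_apply_I_mul_self, fivePointRemainder,
    secondTaylorRemainder_add_neg, secondTaylorRemainder_add_neg, fivePointStencil]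
  module

theorem ContDiffAt.isLittleO_fivePointRemainder {f : ℂ → F} {z : ℂ} (hf : ContDiffAt ℝ 2 f z) :
    fivePointRemainder f z =o[𝓝 0] fun w => ‖w‖ ^ 2 := by
  have hR := hf.isLittleO_secondTaylorRemainder
  refine ((hR.add (hR.comp_smul_of_sq (-1 : ℂ))).add
    ((hR.comp_smul_of_sq I).add (hR.comp_smul_of_sq (-I)))).congr_left fun w => ?_
  simp [fivePointRemainder]

end FivePoint

theorem ContDiffAt.fivePointStencil_div_eq {ρ : ℂ → ℂ} {z₀ : ℂ} (hρ : ContDiffAt ℝ 2 ρ z₀)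
    (hc : wirt (awirt ρ) z₀ ≠ 0) {t : ℝ} (ht : t ≠ 0) (z : ℂ) :
    fivePointStencil ρ z₀ (t • z) / (4 * (t : ℂ) ^ 2 * wirt (awirt ρ) z₀)
      = z * starRingEnd ℂ z
        + (t ^ 2)⁻¹ • ((4 * wirt (awirt ρ) z₀)⁻¹ * fivePointRemainder ρ z₀ (t • z)) := by
  rw [fivePointStencil_eq, ← hρ.four_mul_wirt_awirt, mul_conj', norm_smul, Real.norm_eq_abs,
    mul_pow, sq_abs]
  have : (t : ℂ) ≠ 0 := by exact_mod_cast ht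
  simp only [Complex.real_smul]
  push_cast
  field_simp

/-- second difference quotients converge locally uniformly to z·conj z. -/
theorem approx_zzbar_of_mixed_wirt_ne_zero
    (ρ : ℂ → ℂ) (hρ : ContDiff ℝ 2 ρ) (z₀ : ℂ)
    (h : wirt (awirt ρ) z₀ ≠ 0)
    (K : Set ℂ) (hK : IsCompact K) :
    TendstoUniformlyOn
      (fun (h' : ℝ) (z : ℂ) =>
        (ρ (z₀ + h' * z) + ρ (z₀ - h' * z) + ρ (z₀ + Complex.I * h' * z)
          + ρ (z₀ - Complex.I * h' * z) - 4 * ρ z₀)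
          / (4 * (h' : ℂ)^2 * wirt (awirt ρ) z₀))
      (fun z => z * starRingEnd ℂ z)
      (nhdsWithin (0 : ℝ) (Set.Ioi 0)) K := by
  have hremainder := ((hρ.contDiffAt (x := z₀)).isLittleO_fivePointRemainder.const_mul_left
    (4 * wirt (awirt ρ) z₀)⁻¹).tendstoUniformlyOn_inv_sq_smul hK.isBounded
  rw [Metric.tendstoUniformlyOn_iff] at hremainder ⊢
  intro ε hε
  filter_upwards [nhdsWithin_le_nhds (hremainder ε hε), self_mem_nhdsWithin]
    with t hsmall (ht : 0 < t) z hz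
  have hstencil : ρ (z₀ + t * z) + ρ (z₀ - t * z) + ρ (z₀ + I * t * z) + ρ (z₀ - I * t * z)
      - 4 * ρ z₀ = fivePointStencil ρ z₀ (t • z) := by
    simp [fivePointStencil, Complex.real_smul, mul_assoc]
  rw [hstencil, hρ.contDiffAt.fivePointStencil_div_eq h ht.ne', dist_self_add_right,
    ← dist_zero_left]
  exact hsmall z hz
end

section
/- Let ρ : ℂ → ℂ be twice continuously real-differentiable and not ℝ-affine, K ⊆ ℂ compact, and ε > 0. Then there exist ℂ-affine maps φ : ℂ → ℂ⁴ and ψ : ℂ⁴ → ℂ such that at least one of the following holds: sup_{z∈K} |ψ(ρ^{×4}(φ(z))) − z·conj(z)| < ε, or sup_{z∈K} |ψ(ρ^{×4}(φ(z))) − z²| < ε, or sup_{z∈K} |ψ(ρ^{×4}(φ(z))) − conj(z)²| < ε. -/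
/-!
A C² map that is not ℝ-affine has a nonzero second derivative `Q = D²ρ(w)` at some point `w`.
By Taylor's formula the second difference `(2 / h²) ∑ cᵢ (ρ (w + h aᵢ z) - ρ w)` converges to
`∑ cᵢ Q (aᵢ z) (aᵢ z)` uniformly on bounded sets as `h → 0`, as soon as the first-order terms
cancel, which pairing each `aᵢ` with `-aᵢ` guarantees; with two such pairs this second difference is
a network of width 4. The symmetric form `Q` satisfies `Q z z = P z² + S z z̄ + T z̄²`, and the
combinations `Q z z + Q (iz) (iz) = 2 S z z̄` and, when `S = 0`,
`2 Q z z ∓ i Q ((1 + i) z) ((1 + i) z) = 4 P z²` resp. `4 T z̄²` isolate a monomial with nonzero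
coefficient.
-/

open Complex ComplexConjugate Asymptotics Filter Topology Metric

section Calculus

variable {E F : Type*} [NormedAddCommGroup E] [NormedSpace ℝ E] [NormedAddCommGroup F]

theorem exists_pos_norm_comp_smul_le {R : E → F} (hR : R =o[𝓝 0] fun u => ‖u‖ ^ 2) (M : ℝ)
    {η : ℝ} (hη : 0 < η) : ∃ h > 0, ∀ u, ‖u‖ ≤ M → ‖R (h • u)‖ ≤ η * h ^ 2 := by
  obtain ⟨δ, hδ, hball⟩ := eventually_nhds_iff_ball.1
    (hR.def (show 0 < η / (M ^ 2 + 1) by positivity))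
  set h := δ / (|M| + 1)
  refine ⟨h, by positivity, fun u hu => ?_⟩
  have hsmul : ‖h • u‖ = h * ‖u‖ := by rw [norm_smul, Real.norm_of_nonneg (by positivity)]
  have hsmall : h • u ∈ ball 0 δ := by
    rw [mem_ball_zero_iff, hsmul]
    calc h * ‖u‖ < h * (|M| + 1) := by gcongr; linarith [le_abs_self M]
      _ = δ := div_mul_cancel₀ _ (by positivity)
  calc ‖R (h • u)‖ ≤ η / (M ^ 2 + 1) * ‖‖h • u‖ ^ 2‖ := hball _ hsmall
    _ = η * h ^ 2 * (‖u‖ ^ 2 / (M ^ 2 + 1)) := by rw [norm_pow, norm_norm, hsmul]; ring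
    _ ≤ η * h ^ 2 * 1 := by
        gcongr
        rw [div_le_one (by positivity)]
        nlinarith [norm_nonneg u]
    _ = η * h ^ 2 := mul_one _

variable [NormedSpace ℝ F]

theorem exists_fderiv_fderiv_ne_zero_of_not_affine {f : E → F} (hf : ContDiff ℝ 2 f)
    (hna : ¬ ∃ (A : E →ₗ[ℝ] F) (b : F), ∀ z, f z = A z + b) :
    ∃ w, fderiv ℝ (fderiv ℝ f) w ≠ 0 := by
  by_contra! h
  have hf₁ : Differentiable ℝ f := hf.differentiable two_ne_zero
  have hf₂ : Differentiable ℝ (fderiv ℝ f) := (hf.fderiv_right le_rfl).differentiable one_ne_zero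
  set L := fderiv ℝ f 0
  have hL : ∀ x, fderiv ℝ f x = L := fun x => is_const_of_fderiv_eq_zero hf₂ h x 0
  have hconst : ∀ z, f z - L z = f 0 - L 0 := fun z =>
    is_const_of_fderiv_eq_zero (hf₁.sub L.differentiable)
      (fun x => by rw [fderiv_sub (hf₁ x) L.differentiableAt, hL, L.fderiv, sub_self]) z 0
  refine hna ⟨L, f 0, fun z => ?_⟩
  simpa [sub_eq_iff_eq_add'] using hconst z

theorem isLittleO_taylor_two {f : E → F} {f' : E → E →L[ℝ] F} {f'' : E →L[ℝ] E →L[ℝ] F} {x : E}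
    (hf : ∀ y, HasFDerivAt f (f' y) y) (hx : HasFDerivAt f' f'' x) :
    (fun u => f (x + u) - f x - f' x u - (1 / 2 : ℝ) • f'' u u) =o[𝓝 0] fun u => ‖u‖ ^ 2 := by
  have hquad : ∀ v, HasFDerivAt (fun u => (1 / 2 : ℝ) • f'' u u) (f'' v) v := by
    intro v
    have hderiv := (f''.hasFDerivAt_of_bilinear (hasFDerivAt_id v) (hasFDerivAt_id v)).const_smul
      (1 / 2 : ℝ)
    convert hderiv using 1
    · rfl
    ext y
    simp only [ContinuousLinearMap.precompR_apply, ContinuousLinearMap.compL_apply,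
      ContinuousLinearMap.comp_id, smul_add, add_apply, smul_apply,
      ContinuousLinearMap.precompL_apply, ContinuousLinearMap.id_apply, id_eq,
      second_derivative_symmetric hf hx y v]
    module
  have hrem : ∀ v, HasFDerivAt (fun u => f (x + u) - (1 / 2 : ℝ) • f'' u u)
      (f' (x + v) - f'' v) v := fun v =>
    ((hf (x + v)).comp v ((hasFDerivAt_id v).const_add x)).sub (hquad v)
  rw [isLittleO_iff]
  intro ε hε
  obtain ⟨δ, hδ, hball⟩ := eventually_nhds_iff_ball.1
    ((hasFDerivAt_iff_isLittleO_nhds_zero.1 hx).def hε)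
  filter_upwards [ball_mem_nhds 0 hδ] with u hu
  have hu' : closedBall 0 ‖u‖ ⊆ ball (0 : E) δ := closedBall_subset_ball (by simpa using hu)
  have hmv := (convex_closedBall (0 : E) ‖u‖).norm_image_sub_le_of_norm_hasFDerivWithin_le'
    (x := 0) (y := u) (φ := f' x) (C := ε * ‖u‖) (fun v _ => (hrem v).hasFDerivWithinAt)
    (fun v hv => ?_) (mem_closedBall_self (norm_nonneg u)) (by simp)
  · simp only [add_zero, map_zero, smul_zero, sub_zero] at hmv
    rw [norm_pow, norm_norm, sq, ← mul_assoc]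
    convert hmv using 2
    abel
  · calc ‖f' (x + v) - f'' v - f' x‖ = ‖f' (x + v) - f' x - f'' v‖ := by rw [sub_right_comm]
      _ ≤ ε * ‖v‖ := hball v (hu' hv)
      _ ≤ ε * ‖u‖ := by gcongr; simpa using hv

theorem ContinuousLinearMap.eq_zero_of_forall_apply_self_eq_zero {Q : E →L[ℝ] E →L[ℝ] F}
    (hQ : ∀ x y, Q x y = Q y x) (h : ∀ x, Q x x = 0) : Q = 0 := by
  ext x y
  have hxy := h (x + y)
  simp only [map_add, add_apply, h x, h y, hQ y x, zero_add, add_zero] at hxy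
  rw [← two_smul ℝ] at hxy
  exact (smul_eq_zero.1 hxy).resolve_left two_ne_zero

end Calculus

section Network

/-- `T` is a uniform limit, on every bounded set, of networks `ψ ∘ ρ^{×ι} ∘ φ` with `φ`, `ψ`
`ℂ`-affine. -/
def ApproxOnBounded (ρ : ℂ → ℂ) (ι : Type*) [Fintype ι] (T : ℂ → ℂ) : Prop :=
  ∀ K : Set ℂ, Bornology.IsBounded K → ∀ ε > 0,
    ∃ (A : ℂ →ₗ[ℂ] (ι → ℂ)) (b : ι → ℂ) (B : (ι → ℂ) →ₗ[ℂ] ℂ) (c : ℂ),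
      ∀ z ∈ K, ‖B (fun i => ρ ((A z + b) i)) + c - T z‖ < ε

variable {ι : Type*} [Fintype ι]

theorem exists_network_eq_sum (ρ : ℂ → ℂ) (w : ℂ) (a c : ι → ℂ) :
    ∃ (A : ℂ →ₗ[ℂ] (ι → ℂ)) (b : ι → ℂ) (B : (ι → ℂ) →ₗ[ℂ] ℂ) (c₀ : ℂ),
      ∀ z, B (fun i => ρ ((A z + b) i)) + c₀ = ∑ i, c i * (ρ (w + a i * z) - ρ w) :=
  ⟨LinearMap.pi fun i => a i • LinearMap.id, fun _ => w, Fintype.linearCombination ℂ c,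
    -((∑ i, c i) * ρ w), fun z => by
      simp only [LinearMap.pi_apply, LinearMap.smul_apply, LinearMap.id_apply, smul_eq_mul,
        Pi.add_apply, Fintype.linearCombination_apply, add_comm _ w, mul_sub,
        Finset.sum_sub_distrib, ← Finset.sum_mul, mul_comm (ρ _)]
      ring⟩

theorem exists_second_difference_approx {ρ : ℂ → ℂ} {w : ℂ} {L : ℂ →L[ℝ] ℂ}
    {Q : ℂ →L[ℝ] ℂ →L[ℝ] ℂ}
    (hρ : (fun u => ρ (w + u) - ρ w - L u - (1 / 2 : ℝ) • Q u u) =o[𝓝 0] fun u => ‖u‖ ^ 2)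
    (a c : ι → ℂ) (hL : ∀ z, ∑ i, c i * L (a i * z) = 0) (M : ℝ) {ε : ℝ} (hε : 0 < ε) :
    ∃ h : ℝ, h ≠ 0 ∧ ∀ z, ‖z‖ ≤ M →
      ‖∑ i, 2 / (h : ℂ) ^ 2 * c i * (ρ (w + h * a i * z) - ρ w)
        - ∑ i, c i * Q (a i * z) (a i * z)‖ < ε := by
  set η := ε / (2 * (∑ i, ‖c i‖ + 1))
  obtain ⟨h, hh, hrem⟩ := exists_pos_norm_comp_smul_le hρ (‖a‖ * M) (show 0 < η by positivity)
  refine ⟨h, hh.ne', fun z hz => ?_⟩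
  set r : ι → ℂ := fun i => ρ (w + h • (a i * z)) - ρ w - L (h • (a i * z))
    - (1 / 2 : ℝ) • Q (h • (a i * z)) (h • (a i * z))
  have hr : ∀ i, ‖r i‖ ≤ η * h ^ 2 := fun i => hrem _ <| by
    rw [norm_mul]
    exact mul_le_mul (norm_le_pi_norm a i) hz (norm_nonneg z) (norm_nonneg a)
  have hterm : ∀ i, 2 / (h : ℂ) ^ 2 * c i * (ρ (w + h * a i * z) - ρ w)
      - c i * Q (a i * z) (a i * z)
        = 2 / (h : ℂ) ^ 2 * (c i * r i) + 2 / h * (c i * L (a i * z)) := by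
    intro i
    have hh' : (h : ℂ) ≠ 0 := by exact_mod_cast hh.ne'
    simp only [r, map_smul, smul_apply]
    simp only [Complex.real_smul]
    field_simp
    push_cast
    ring
  rw [← Finset.sum_sub_distrib, Finset.sum_congr rfl fun i _ => hterm i, Finset.sum_add_distrib,
    ← Finset.mul_sum, ← Finset.mul_sum, hL, mul_zero, add_zero]
  have hsum : ‖∑ i, c i * r i‖ ≤ (∑ i, ‖c i‖) * (η * h ^ 2) := by
    rw [Finset.sum_mul]
    refine (norm_sum_le _ _).trans (Finset.sum_le_sum fun i _ => ?_)
    rw [norm_mul]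
    exact mul_le_mul_of_nonneg_left (hr i) (norm_nonneg _)
  calc ‖2 / (h : ℂ) ^ 2 * ∑ i, c i * r i‖ = 2 / h ^ 2 * ‖∑ i, c i * r i‖ := by
        rw [norm_mul, norm_div, norm_pow, Complex.norm_real, Real.norm_of_nonneg hh.le,
          Complex.norm_two]
    _ ≤ 2 / h ^ 2 * ((∑ i, ‖c i‖) * (η * h ^ 2)) := by gcongr
    _ = ε * (∑ i, ‖c i‖) / (∑ i, ‖c i‖ + 1) := by simp only [η]; field_simp
    _ < ε := by
        rw [div_lt_iff₀ (by positivity)]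
        nlinarith

theorem approxOnBounded_of_isLittleO {ρ : ℂ → ℂ} {w : ℂ} {L : ℂ →L[ℝ] ℂ}
    {Q : ℂ →L[ℝ] ℂ →L[ℝ] ℂ}
    (hρ : (fun u => ρ (w + u) - ρ w - L u - (1 / 2 : ℝ) • Q u u) =o[𝓝 0] fun u => ‖u‖ ^ 2)
    (a c : ι → ℂ) (hL : ∀ z, ∑ i, c i * L (a i * z) = 0) :
    ApproxOnBounded ρ ι fun z => ∑ i, c i * Q (a i * z) (a i * z) := by
  intro K hK ε hε
  obtain ⟨M, hM⟩ := hK.exists_norm_le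
  obtain ⟨h, -, happrox⟩ := exists_second_difference_approx hρ a c hL M hε
  obtain ⟨A, b, B, c₀, hnet⟩ :=
    exists_network_eq_sum ρ w (fun i => h * a i) (fun i => 2 / (h : ℂ) ^ 2 * c i)
  exact ⟨A, b, B, c₀, fun z hz => hnet z ▸ happrox z (hM z hz)⟩

theorem approxOnBounded_fin_four_of_isLittleO {ρ : ℂ → ℂ} {w : ℂ} {L : ℂ →L[ℝ] ℂ}
    {Q : ℂ →L[ℝ] ℂ →L[ℝ] ℂ}
    (hρ : (fun u => ρ (w + u) - ρ w - L u - (1 / 2 : ℝ) • Q u u) =o[𝓝 0] fun u => ‖u‖ ^ 2)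
    (α β p q : ℂ) {T : ℂ → ℂ} (hT : ∀ z, p * Q (α * z) (α * z) + q * Q (β * z) (β * z) = T z) :
    ApproxOnBounded ρ (Fin 4) T := by
  have hodd : ∀ z, ∑ i, ![p / 2, p / 2, q / 2, q / 2] i * L (![α, -α, β, -β] i * z) = 0 := by
    intro z
    simp [Fin.sum_univ_four, neg_mul, map_neg]
  convert approxOnBounded_of_isLittleO hρ _ _ hodd using 2 with z
  rw [← hT z]
  simp only [Fin.sum_univ_four, Matrix.cons_val_zero, Matrix.cons_val_one, Matrix.cons_val,
    neg_mul, map_neg, neg_apply, neg_neg]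
  ring

end Network

section QuadraticCoefficients

variable (Q : ℂ →L[ℝ] ℂ →L[ℝ] ℂ)

noncomputable def sqCoeff : ℂ := (Q 1 1 - Q I I - 2 * I * Q 1 I) / 4

noncomputable def normSqCoeff : ℂ := (Q 1 1 + Q I I) / 2

noncomputable def conjSqCoeff : ℂ := (Q 1 1 - Q I I + 2 * I * Q 1 I) / 4

variable {Q}

theorem apply_self_eq_coeff (hQ : ∀ x y, Q x y = Q y x) (z : ℂ) :
    Q z z = sqCoeff Q * z ^ 2 + normSqCoeff Q * (z * conj z) + conjSqCoeff Q * conj z ^ 2 := by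
  obtain ⟨x, y, rfl⟩ : ∃ x y : ℝ, z = x • 1 + y • I :=
    ⟨z.re, z.im, by simp [Complex.real_smul, Complex.re_add_im]⟩
  have hexpand : Q (x • 1 + y • I) (x • 1 + y • I)
      = (x ^ 2) • Q 1 1 + (x * y) • (Q 1 I + Q I 1) + (y ^ 2) • Q I I := by
    simp only [map_add, map_smul, add_apply, smul_apply]
    module
  rw [hexpand, hQ I 1]
  simp only [Complex.real_smul, map_add, map_mul, conj_ofReal, conj_I, map_one, sqCoeff,
    normSqCoeff, conjSqCoeff]
  push_cast
  linear_combination (Q I I * y ^ 2 + 2 * x * y * Q 1 I) * I_sq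

theorem eq_zero_of_coeff_eq_zero (hQ : ∀ x y, Q x y = Q y x) (hP : sqCoeff Q = 0)
    (hS : normSqCoeff Q = 0) (hT : conjSqCoeff Q = 0) : Q = 0 := by
  refine ContinuousLinearMap.eq_zero_of_forall_apply_self_eq_zero hQ fun z => ?_
  rw [apply_self_eq_coeff hQ, hP, hS, hT]
  ring

theorem normSqCoeff_combination (hQ : ∀ x y, Q x y = Q y x) (hS : normSqCoeff Q ≠ 0) (z : ℂ) :
    (2 * normSqCoeff Q)⁻¹ * Q z z + (2 * normSqCoeff Q)⁻¹ * Q (I * z) (I * z) = z * conj z := by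
  rw [apply_self_eq_coeff hQ z, apply_self_eq_coeff hQ (I * z)]
  simp only [map_mul, conj_I]
  field_simp
  linear_combination
    (-(z * normSqCoeff Q * conj z) + z ^ 2 * sqCoeff Q + conj z ^ 2 * conjSqCoeff Q) * I_sq

theorem sqCoeff_combination (hQ : ∀ x y, Q x y = Q y x) (hS : normSqCoeff Q = 0)
    (hP : sqCoeff Q ≠ 0) (z : ℂ) :
    (2 * sqCoeff Q)⁻¹ * Q z z + (-I / (4 * sqCoeff Q)) * Q ((1 + I) * z) ((1 + I) * z)
      = z ^ 2 := by
  rw [apply_self_eq_coeff hQ z, apply_self_eq_coeff hQ ((1 + I) * z), hS]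
  simp only [map_mul, map_add, map_one, conj_I]
  field_simp
  linear_combination (2 * (2 - I) * conj z ^ 2 * conjSqCoeff Q
    - 2 * (2 + I) * z ^ 2 * sqCoeff Q) * I_sq

theorem conjSqCoeff_combination (hQ : ∀ x y, Q x y = Q y x) (hS : normSqCoeff Q = 0)
    (hT : conjSqCoeff Q ≠ 0) (z : ℂ) :
    (2 * conjSqCoeff Q)⁻¹ * Q z z + (I / (4 * conjSqCoeff Q)) * Q ((1 + I) * z) ((1 + I) * z)
      = conj z ^ 2 := by
  rw [apply_self_eq_coeff hQ z, apply_self_eq_coeff hQ ((1 + I) * z), hS]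
  simp only [map_mul, map_add, map_one, conj_I]
  field_simp
  linear_combination (2 * (2 + I) * z ^ 2 * sqCoeff Q
    - 2 * (2 - I) * conj z ^ 2 * conjSqCoeff Q) * I_sq

end QuadraticCoefficients

/-- if ρ is C² (real sense) and not ℝ-affine then one of z·conj z, z², conj(z)²
can be uniformly approximated on compacts by a shallow network ψ ∘ ρ^{×4} ∘ φ of width 4. -/
theorem approx_quadratic_of_not_affine
    (ρ : ℂ → ℂ) (hρ : ContDiff ℝ 2 ρ)
    (hna : ¬ ∃ (A : ℂ →ₗ[ℝ] ℂ) (b : ℂ), ∀ z, ρ z = A z + b)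
    (K : Set ℂ) (hK : IsCompact K) (ε : ℝ) (hε : 0 < ε) :
    ∃ (A : ℂ →ₗ[ℂ] (Fin 4 → ℂ)) (b : Fin 4 → ℂ)
      (B : (Fin 4 → ℂ) →ₗ[ℂ] ℂ) (c : ℂ),
      (∀ z ∈ K, ‖
          (B (fun i => ρ ((A z + b) i)) + c - z * starRingEnd ℂ z)‖ < ε) ∨
      (∀ z ∈ K, ‖
          (B (fun i => ρ ((A z + b) i)) + c - z^2)‖ < ε) ∨
      (∀ z ∈ K, ‖
          (B (fun i => ρ ((A z + b) i)) + c - (starRingEnd ℂ z)^2)‖ < ε) := by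
  obtain ⟨w, hw⟩ := exists_fderiv_fderiv_ne_zero_of_not_affine hρ hna
  have hρ' : ∀ y, HasFDerivAt ρ (fderiv ℝ ρ y) y := fun y =>
    (hρ.differentiable two_ne_zero y).hasFDerivAt
  have hρ'' : HasFDerivAt (fderiv ℝ ρ) (fderiv ℝ (fderiv ℝ ρ) w) w :=
    ((hρ.fderiv_right le_rfl).differentiable one_ne_zero w).hasFDerivAt
  set Q := fderiv ℝ (fderiv ℝ ρ) w
  have hQ : ∀ x y, Q x y = Q y x := second_derivative_symmetric hρ' hρ''
  have htaylor := isLittleO_taylor_two hρ' hρ''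
  by_cases hS : normSqCoeff Q = 0
  · by_cases hP : sqCoeff Q = 0
    · have hT : conjSqCoeff Q ≠ 0 := fun hT => hw (eq_zero_of_coeff_eq_zero hQ hP hS hT)
      obtain ⟨A, b, B, c, h⟩ := approxOnBounded_fin_four_of_isLittleO htaylor 1 (1 + I) _ _
        (T := fun z => conj z ^ 2)
        (fun z => by simpa only [one_mul] using conjSqCoeff_combination hQ hS hT z)
        K hK.isBounded ε hε
      exact ⟨A, b, B, c, Or.inr (Or.inr h)⟩
    · obtain ⟨A, b, B, c, h⟩ := approxOnBounded_fin_four_of_isLittleO htaylor 1 (1 + I) _ _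
        (T := fun z => z ^ 2)
        (fun z => by simpa only [one_mul] using sqCoeff_combination hQ hS hP z)
        K hK.isBounded ε hε
      exact ⟨A, b, B, c, Or.inr (Or.inl h)⟩
  · obtain ⟨A, b, B, c, h⟩ := approxOnBounded_fin_four_of_isLittleO htaylor 1 I _ _
      (T := fun z => z * conj z)
      (fun z => by simpa only [one_mul] using normSqCoeff_combination hQ hS z)
      K hK.isBounded ε hε
    exact ⟨A, b, B, c, Or.inl h⟩
end

section
/- Every shallow complex-valued neural network of the form f = V₂ ∘ ρ^{×W} ∘ V₁ with W = n+m+1 hidden neurons, V₁ : ℂⁿ → ℂ^{n+m+1} and V₂ : ℂ^{n+m+1} → ℂ^m ℂ-affine, equals a register model: there exist L ∈ ℕ and ℂ-affine maps T₁ : ℂⁿ → ℂ^{n+m+1}, T_ℓ : ℂ^{n+m+1} → ℂ^{n+m+1} for 2 ≤ ℓ ≤ L−1, and T_L : ℂ^{n+m+1} → ℂ^m such that f = T_L ∘ ρ̃ ∘ T_{L−1} ∘ … ∘ ρ̃ ∘ T₁, where ρ̃ : ℂ^{n+m+1} → ℂ^{n+m+1} applies ρ to the (n+1)-st coordinate and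 the identity to all other coordinates. -/
/-- ρ̃ : ℂ^{n+m+1} → ℂ^{n+m+1} applies ρ to the (n+1)-st coordinate (index n) and the
identity to all other coordinates. -/
def rhoTilde (n m : ℕ) (ρ : ℂ → ℂ) : (Fin (n + m + 1) → ℂ) → (Fin (n + m + 1) → ℂ) :=
  fun v i => if (i : ℕ) = n then ρ (v i) else v i

/-! Between consecutive applications of ρ̃, which acts on slot `n` only, rotate the register
by one slot. After `n + m` rotations every one of the `n + m + 1` slots has passed through slot
`n` exactly once, so ρ has been applied to each coordinate exactly once; one more rotation
restores the original order and is absorbed into the affine output layer. -/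

open Fin.NatCast

theorem List.foldr_comp_replicate {α : Type*} (g : α → α) (k : ℕ) :
    (List.replicate k g).foldr (· ∘ ·) id = g^[k] := by
  induction k with
  | zero => rfl
  | succ k ih => rw [List.replicate_succ, List.foldr_cons, ih, Function.iterate_succ']

section mapWhere

variable {ι κ α : Type*}

def mapWhere (p : ι → Prop) [DecidablePred p] (f : α → α) (v : ι → α) : ι → α :=
  fun i => if p i then f (v i) else v i

theorem mapWhere_congr {p q : ι → Prop} [DecidablePred p] [DecidablePred q]
    (h : ∀ i, p i ↔ q i) (f : α → α) : mapWhere p f = mapWhere q f := by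
  funext v i
  simp only [mapWhere, h]

theorem mapWhere_comp (p : κ → Prop) [DecidablePred p] (f : α → α) (v : κ → α) (e : ι → κ) :
    mapWhere (fun i => p (e i)) f (v ∘ e) = mapWhere p f v ∘ e :=
  rfl

theorem mapWhere_mapWhere {p q : ι → Prop} [DecidablePred p] [DecidablePred q]
    (h : ∀ i, ¬(p i ∧ q i)) (f : α → α) (v : ι → α) :
    mapWhere p f (mapWhere q f v) = mapWhere (fun i => p i ∨ q i) f v := by
  funext i
  by_cases hp : p i <;> by_cases hq : q i <;> simp_all [mapWhere]

theorem mapWhere_of_forall {p : ι → Prop} [DecidablePred p] (h : ∀ i, p i) (f : α → α)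
    (v : ι → α) : mapWhere p f v = f ∘ v := by
  funext i
  simp [mapWhere, h]

end mapWhere

theorem Fin.eq_add_natCast_iff {N k : ℕ} (hk : k ≤ N) (c i : Fin (N + 1)) :
    i = c + (k : Fin (N + 1)) ↔ (i - c).val = k := by
  rw [← sub_eq_iff_eq_add', Fin.ext_iff, Fin.val_cast_of_lt (by omega)]

section rotation

variable {α : Type*} {N : ℕ}

-- `(i - c).val ≤ k` says that `i` lies on the arc `c, c + 1, …, c + k` of the cycle `Fin (N + 1)`.
theorem mapWhere_arc_succ (f : α → α) (c : Fin (N + 1)) {k : ℕ} (hk : k < N)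
    (v : Fin (N + 1) → α) :
    mapWhere (· = c + ((k + 1 : ℕ) : Fin (N + 1))) f (mapWhere (fun i => (i - c).val ≤ k) f v) =
      mapWhere (fun i => (i - c).val ≤ k + 1) f v := by
  have hcast := Fin.eq_add_natCast_iff (k := k + 1) (by omega) c
  rw [mapWhere_mapWhere (fun i => by rw [hcast]; omega)]
  exact congrFun (mapWhere_congr (fun i => by rw [hcast]; omega) f) v

theorem iterate_mapWhere_comp_rotate (f : α → α) (c : Fin (N + 1)) {k : ℕ} (hk : k ≤ N)
    (v : Fin (N + 1) → α) :
    (mapWhere (· = c) f ∘ fun w => w ∘ (· + 1))^[k] (mapWhere (· = c) f v) =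
      mapWhere (fun i => (i - c).val ≤ k) f v ∘ (· + (k : Fin (N + 1))) := by
  induction k with
  | zero =>
    simp only [Function.iterate_zero, id_eq, Nat.cast_zero, add_zero]
    exact congrFun (mapWhere_congr (fun i => by simp [Fin.ext_iff, sub_eq_zero]) f) v
  | succ k ih =>
    set K : Fin (N + 1) := ((k + 1 : ℕ) : Fin (N + 1))
    have hshift : ((· + (k : Fin (N + 1))) ∘ (· + 1)) = (· + K) := by
      funext i; simp only [Function.comp_apply, K]; push_cast; abel
    have hc : ∀ i, i = c ↔ i + K = c + K := fun i => (add_left_inj K).symm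
    rw [Function.iterate_succ_apply', ih (by omega), Function.comp_apply, Function.comp_assoc,
      hshift, mapWhere_congr hc, mapWhere_comp (· = c + K), mapWhere_arc_succ f c hk]

end rotation

theorem rhoTilde_eq_mapWhere (n m : ℕ) (ρ : ℂ → ℂ) :
    rhoTilde n m ρ = mapWhere (· = (⟨n, by omega⟩ : Fin (n + m + 1))) ρ :=
  mapWhere_congr (p := fun i : Fin (n + m + 1) => (i : ℕ) = n)
    (fun _ => Fin.ext_iff (b := ⟨n, by omega⟩).symm) ρ

/-- every shallow CVNN with n+m+1 hidden neurons equals a register model: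
f = T_L ∘ ρ̃ ∘ T_{L-1} ∘ … ∘ ρ̃ ∘ T₁ with all Tℓ ℂ-affine. -/
theorem shallow_network_eq_register_model
    (n m : ℕ) (ρ : ℂ → ℂ)
    (V₁ : (Fin n → ℂ) →ₗ[ℂ] (Fin (n + m + 1) → ℂ)) (b₁ : Fin (n + m + 1) → ℂ)
    (V₂ : (Fin (n + m + 1) → ℂ) →ₗ[ℂ] (Fin m → ℂ)) (b₂ : Fin m → ℂ) :
    ∃ (N : ℕ)
      (T₁ : (Fin n → ℂ) → (Fin (n + m + 1) → ℂ))
      (Tmid : Fin N → ((Fin (n + m + 1) → ℂ) → (Fin (n + m + 1) → ℂ)))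
      (TL : (Fin (n + m + 1) → ℂ) → (Fin m → ℂ)),
      (∃ (A : (Fin n → ℂ) →ₗ[ℂ] (Fin (n + m + 1) → ℂ)) (c : Fin (n + m + 1) → ℂ),
        T₁ = fun x => A x + c) ∧
      (∀ i, ∃ (A : (Fin (n + m + 1) → ℂ) →ₗ[ℂ] (Fin (n + m + 1) → ℂ))
        (c : Fin (n + m + 1) → ℂ), Tmid i = fun x => A x + c) ∧
      (∃ (A : (Fin (n + m + 1) → ℂ) →ₗ[ℂ] (Fin m → ℂ)) (c : Fin m → ℂ),
        TL = fun x => A x + c) ∧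
      (fun x => V₂ (fun i => ρ ((V₁ x + b₁) i)) + b₂) =
        TL ∘ ((List.ofFn (fun i => rhoTilde n m ρ ∘ Tmid i)).foldr (· ∘ ·) id)
          ∘ rhoTilde n m ρ ∘ T₁ := by
  let rotate := LinearMap.funLeft ℂ ℂ (fun i : Fin (n + m + 1) => i + 1)
  refine ⟨n + m, fun x => V₁ x + b₁, fun _ w => w ∘ (· + 1), fun w => V₂ (w ∘ (· + 1)) + b₂,
    ⟨V₁, b₁, rfl⟩, fun _ => ⟨rotate, 0, by simp only [add_zero]; rfl⟩, ⟨V₂ ∘ₗ rotate, b₂, rfl⟩, ?_⟩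
  have hcycle (i : Fin (n + m + 1)) : i + 1 + ((n + m : ℕ) : Fin (n + m + 1)) = i := by
    rw [add_assoc i, add_comm 1, ← Nat.cast_add_one, Fin.natCast_self, add_zero]
  funext x
  simp only [Function.comp_apply, List.ofFn_const, List.foldr_comp_replicate, rhoTilde_eq_mapWhere]
  rw [iterate_mapWhere_comp_rotate ρ _ le_rfl, mapWhere_of_forall (fun i => Fin.is_le _)]
  simp only [Function.comp_def, hcycle]
end

section
/- Let ρ : ℂ → ℂ be given by ρ(z) = φ(Re(z)) for some continuous φ : ℝ → ℂ, and let n, m ∈ ℕ. Then for every function g : ℂⁿ → ℂ^m of the form g(z) = ψ(Re(Vz) + b) with V ∈ ℂ^{(2n−1)×n}, b ∈ ℝ^{2n−1}, ψ : ℝ^{2n−1} → ℂ^m arbitrary (Re taken componentwise), one has sup_{z ∈ K} ‖f(z) − g(z)‖ ≥ c for some fixed c > 0 independent of g, where K = ([−2,2] + i[−2,2])ⁿ and f(z) = (‖z‖, 0, …, 0). In particular, there exists v ∈ ℂⁿ with ‖v‖ = 1 and g(z + v) = g(z) for all z ∈ ℂⁿ. -/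
/-!
The map `z ↦ Re (V z)` is `ℝ`-linear from `ℂⁿ ≅ ℝ²ⁿ` to `ℝ²ⁿ⁻¹`, so it kills some unit vector `v`.
Then `g(z + v) = g(z)` for all `z`; in particular `g(v) = g(0)`, while `f(v) - f(0) = (1, 0, …, 0)`
has norm `1`, so `g` misses `f` by at least `1/2` at `0` or at `v`, both of which lie in `K`.
-/

open Module

theorem LinearMap.exists_norm_eq_one_apply_eq_zero_of_finrank_lt {𝕜 E F : Type*} [RCLike 𝕜]
    [NormedAddCommGroup E] [NormedSpace 𝕜 E] [FiniteDimensional 𝕜 E]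
    [AddCommGroup F] [Module 𝕜 F] [FiniteDimensional 𝕜 F]
    (L : E →ₗ[𝕜] F) (h : finrank 𝕜 F < finrank 𝕜 E) : ∃ v, ‖v‖ = 1 ∧ L v = 0 := by
  obtain ⟨w, hw, hw0⟩ := (LinearMap.ker L).ne_bot_iff.mp (LinearMap.ker_ne_bot_of_finrank_lt h)
  refine ⟨(‖w‖ : 𝕜)⁻¹ • w, norm_smul_inv_norm hw0, ?_⟩
  rw [map_smul, LinearMap.mem_ker.mp hw, smul_zero]

theorem finrank_real_euclideanSpace_complex (ι : Type*) [Fintype ι] :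
    finrank ℝ (EuclideanSpace ℂ ι) = 2 * Fintype.card ι := by
  rw [(WithLp.linearEquiv 2 ℝ (ι → ℂ)).finrank_eq, finrank_pi_fintype,
    Complex.finrank_real_complex, Finset.sum_const, smul_eq_mul, Finset.card_univ, mul_comm]

noncomputable def reMulVec {ι κ : Type*} [Fintype κ] (V : Matrix ι κ ℂ) :
    EuclideanSpace ℂ κ →ₗ[ℝ] (ι → ℝ) :=
  Complex.reLm.compLeft ι ∘ₗ (V.mulVecLin.restrictScalars ℝ) ∘ₗ
    (WithLp.linearEquiv 2 ℝ (κ → ℂ)).toLinearMap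

theorem reMulVec_apply {ι κ : Type*} [Fintype κ] (V : Matrix ι κ ℂ) (z : EuclideanSpace ℂ κ)
    (i : ι) : reMulVec V z i = (∑ j, V i j * z j).re :=
  rfl

theorem half_norm_sub_le_or {E : Type*} [SeminormedAddCommGroup E] (a b p : E) :
    ‖a - b‖ / 2 ≤ ‖a - p‖ ∨ ‖a - b‖ / 2 ≤ ‖b - p‖ := by
  by_contra! h
  linarith [norm_sub_le_norm_sub_add_norm_sub a p b, norm_sub_rev b p]

theorem norm_toLp_ite_val_eq_zero {m : ℕ} (hm : 0 < m) (r : ℂ) :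
    ‖(WithLp.toLp 2 (fun j : Fin m => if (j : ℕ) = 0 then r else 0) : EuclideanSpace ℂ (Fin m))‖
      = ‖r‖ := by
  have h : (WithLp.toLp 2 (fun j : Fin m => if (j : ℕ) = 0 then r else 0) : EuclideanSpace ℂ (Fin m))
      = PiLp.single 2 ⟨0, hm⟩ r := by
    ext j
    simp [Fin.ext_iff]
  rw [h, PiLp.norm_single]

theorem EuclideanSpace.re_im_mem_Icc_of_norm_le {ι : Type*} [Fintype ι] {v : EuclideanSpace ℂ ι}
    {r : ℝ} (hv : ‖v‖ ≤ r) (i : ι) :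
    (v i).re ∈ Set.Icc (-r) r ∧ (v i).im ∈ Set.Icc (-r) r := by
  have hvi : ‖v i‖ ≤ r := (PiLp.norm_apply_le v i).trans hv
  exact ⟨abs_le.mp ((Complex.abs_re_le_norm _).trans hvi),
    abs_le.mp ((Complex.abs_im_le_norm _).trans hvi)⟩

theorem not_universal_of_real_part_activation_general
    (n m : ℕ) (hn : 0 < n) (hm : 0 < m) :
    ∃ c > (0 : ℝ),
      ∀ (V : Matrix (Fin (2 * n - 1)) (Fin n) ℂ) (b : Fin (2 * n - 1) → ℝ)
        (ψ : (Fin (2 * n - 1) → ℝ) → EuclideanSpace ℂ (Fin m)),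
        (∃ z : EuclideanSpace ℂ (Fin n),
          (∀ i, (z i).re ∈ Set.Icc (-2 : ℝ) 2 ∧ (z i).im ∈ Set.Icc (-2 : ℝ) 2) ∧
          c ≤ ‖(show EuclideanSpace ℂ (Fin m) from WithLp.toLp 2 (fun j => if (j : ℕ) = 0 then (‖z‖ : ℂ) else 0))
                - ψ (fun i => (∑ j, V i j * z j).re + b i)‖) ∧
        ∃ v : EuclideanSpace ℂ (Fin n), ‖v‖ = 1 ∧
          ∀ z : EuclideanSpace ℂ (Fin n),
            ψ (fun i => (∑ j, V i j * (z + v) j).re + b i)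
              = ψ (fun i => (∑ j, V i j * z j).re + b i) := by
  refine ⟨1 / 2, by norm_num, fun V b ψ => ?_⟩
  obtain ⟨v, hv1, hVv⟩ := (reMulVec V).exists_norm_eq_one_apply_eq_zero_of_finrank_lt
    (by simp only [finrank_real_euclideanSpace_complex, finrank_fin_fun, Fintype.card_fin]; omega)
  have hshift (z : EuclideanSpace ℂ (Fin n)) :
      (fun i => (∑ j, V i j * (z + v) j).re + b i) = fun i => (∑ j, V i j * z j).re + b i := by
    have h : reMulVec V (z + v) = reMulVec V z := by rw [map_add, hVv, add_zero]
    funext i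
    rw [← reMulVec_apply, ← reMulVec_apply, h]
  refine ⟨?_, v, hv1, fun z => congrArg ψ (hshift z)⟩
  set f : EuclideanSpace ℂ (Fin n) → EuclideanSpace ℂ (Fin m) :=
    fun z => WithLp.toLp 2 (fun j => if (j : ℕ) = 0 then (‖z‖ : ℂ) else 0)
  have hf (z) : ‖f z‖ = ‖z‖ := by simp [f, norm_toLp_ite_val_eq_zero hm]
  have hf0 : f 0 = 0 := norm_eq_zero.mp (by rw [hf, norm_zero])
  have hψv : ψ (fun i => (∑ j, V i j * v j).re + b i)
      = ψ (fun i => (∑ j, V i j * (0 : EuclideanSpace ℂ (Fin n)) j).re + b i) := by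
    simpa using congrArg ψ (hshift 0)
  rcases half_norm_sub_le_or (f v) (f 0) (ψ (fun i => (∑ j, V i j * v j).re + b i)) with h | h
  all_goals rw [hf0, sub_zero, hf, hv1] at h
  · exact ⟨v, EuclideanSpace.re_im_mem_Icc_of_norm_le (by norm_num [hv1]), h⟩
  · exact ⟨0, fun i => by simp, by rw [← hψv]; change 1 / 2 ≤ ‖f 0 - _‖; rwa [hf0]⟩

/-- networks whose first layer uses an activation depending only on the
real part, with only 2n−1 hidden neurons in the first layer, are uniformly bounded away
from f(z) = (‖z‖, 0, …, 0) on K = ([−2,2]+i[−2,2])ⁿ; moreover each such network is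
invariant under translation by some unit vector. -/
theorem not_universal_of_real_part_activation
    (n m : ℕ) (hn : 0 < n) (hm : 0 < m)
    (φ : ℝ → ℂ) (hφ : Continuous φ) (ρ : ℂ → ℂ) (hρ : ∀ z, ρ z = φ z.re) :
    ∃ c > (0 : ℝ),
      ∀ (V : Matrix (Fin (2 * n - 1)) (Fin n) ℂ) (b : Fin (2 * n - 1) → ℝ)
        (ψ : (Fin (2 * n - 1) → ℝ) → EuclideanSpace ℂ (Fin m)),
        (∃ z : EuclideanSpace ℂ (Fin n),
          (∀ i, (z i).re ∈ Set.Icc (-2 : ℝ) 2 ∧ (z i).im ∈ Set.Icc (-2 : ℝ) 2) ∧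
          c ≤ ‖(show EuclideanSpace ℂ (Fin m) from WithLp.toLp 2 (fun j => if (j : ℕ) = 0 then (‖z‖ : ℂ) else 0))
                - ψ (fun i => (∑ j, V i j * z j).re + b i)‖) ∧
        ∃ v : EuclideanSpace ℂ (Fin n), ‖v‖ = 1 ∧
          ∀ z : EuclideanSpace ℂ (Fin n),
            ψ (fun i => (∑ j, V i j * (z + v) j).re + b i)
              = ψ (fun i => (∑ j, V i j * z j).re + b i) :=
  not_universal_of_real_part_activation_general n m hn hm
end

section
/- Let ρ(z) = sin(z) + w(z)·exp(−z) with w : ℂ → ℂ continuous and bounded. Then for every compact K ⊆ ℂ and every ε > 0 there exist h > 0 and k ∈ ℕ such that sup_{z ∈ K} |(1/h)·ρ(hz + 2πk) − z| < ε. In particular, the identity on ℂ can be uniformly approximated on compact sets by maps of the form ψ ∘ ρ ∘ φ with φ, ψ : ℂ → ℂ ℂ-affine. -/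
/-!
Since `sin` is `2π`-periodic, `(1/h) ρ(hz + 2πk) - z` splits as `((1/h) sin(hz) - z)` plus
`(1/h) w(·) e^{-hz} e^{-2πk}`. As `sin u = u + O(‖u‖²)` near `0`, the first term is `O(h‖z‖²)`,
so a small `h` makes it small uniformly on `K`; with `h` fixed, the factor `e^{-2πk}` makes the
second term small as `k → ∞`.
-/

open Filter Topology Real

namespace Complex

theorem norm_sin_sub_self_le {u : ℂ} (hu : ‖u‖ ≤ 1) : ‖sin u - u‖ ≤ ‖u‖ ^ 2 := by
  have h3 : ‖u‖ ^ 3 ≤ ‖u‖ ^ 2 := pow_le_pow_of_le_one (norm_nonneg u) hu (by norm_num)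
  have h5 : ‖u‖ ^ 5 ≤ ‖u‖ ^ 2 := pow_le_pow_of_le_one (norm_nonneg u) hu (by norm_num)
  calc ‖sin u - u‖ = ‖(sin u - (u - u ^ 3 / 6)) - u ^ 3 / 6‖ := by ring_nf
    _ ≤ ‖u‖ ^ 5 / 100 + ‖u‖ ^ 3 / 6 :=
      (norm_sub_le _ _).trans (add_le_add (sin_bound hu) (by simp [norm_pow]))
    _ ≤ ‖u‖ ^ 2 := by nlinarith [sq_nonneg ‖u‖]

theorem norm_inv_mul_sin_mul_sub_le {h : ℝ} (hh : 0 < h) {z : ℂ} (hz : h * ‖z‖ ≤ 1) :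
    ‖(h : ℂ)⁻¹ * sin (h * z) - z‖ ≤ h * ‖z‖ ^ 2 := by
  have hnorm : ‖(h : ℂ) * z‖ = h * ‖z‖ := by simp [abs_of_pos hh]
  calc ‖(h : ℂ)⁻¹ * sin (h * z) - z‖ = h⁻¹ * ‖sin (h * z) - h * z‖ := by
        rw [show (h : ℂ)⁻¹ * sin (h * z) - z = (h : ℂ)⁻¹ * (sin (h * z) - h * z) by
            rw [mul_sub, inv_mul_cancel_left₀ (ofReal_ne_zero.mpr hh.ne')],
          norm_mul, norm_inv, norm_real, Real.norm_of_nonneg hh.le]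
    _ ≤ h⁻¹ * (h * ‖z‖) ^ 2 := by
        gcongr
        exact hnorm ▸ norm_sin_sub_self_le (hnorm ▸ hz)
    _ = h * ‖z‖ ^ 2 := by field_simp

theorem norm_exp_neg_add_ofReal_le (u : ℂ) (t : ℝ) :
    ‖exp (-(u + t))‖ ≤ Real.exp ‖u‖ * Real.exp (-t) := by
  rw [neg_add, exp_add, norm_mul, ← ofReal_neg, ← ofReal_exp, norm_real,
    Real.norm_of_nonneg (Real.exp_pos _).le]
  gcongr
  simpa using norm_exp_le_exp_norm (-u)

theorem norm_inv_mul_sin_add_mul_exp_neg_sub_le {w : ℂ → ℂ} {M : ℝ} (hM : ∀ z, ‖w z‖ ≤ M)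
    {h : ℝ} (hh : 0 < h) {z : ℂ} (hz : h * ‖z‖ ≤ 1) (k : ℕ) :
    ‖(h : ℂ)⁻¹ * (sin (h * z + 2 * π * k) + w (h * z + 2 * π * k) * exp (-(h * z + 2 * π * k)))
      - z‖ ≤ h * ‖z‖ ^ 2 + M / h * Real.exp (h * ‖z‖) * Real.exp (-(2 * π * k)) := by
  have hsin : sin (h * z + 2 * π * k) = sin (h * z) := by
    rw [← sin_add_nat_mul_two_pi (h * z) k]; ring_nf
  have hexp : ‖exp (-(h * z + 2 * π * k))‖ ≤ Real.exp (h * ‖z‖) * Real.exp (-(2 * π * k)) := by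
    convert norm_exp_neg_add_ofReal_le (h * z) (2 * π * k) using 3
    · push_cast; rfl
    · simp [abs_of_pos hh]
  set a : ℂ := h * z + 2 * π * k
  have hperturb : ‖(h : ℂ)⁻¹ * (w a * exp (-a))‖ ≤
      M / h * Real.exp (h * ‖z‖) * Real.exp (-(2 * π * k)) := by
    rw [norm_mul, norm_mul, norm_inv, norm_real, Real.norm_of_nonneg hh.le]
    calc h⁻¹ * (‖w a‖ * ‖exp (-a)‖)
        ≤ h⁻¹ * (M * (Real.exp (h * ‖z‖) * Real.exp (-(2 * π * k)))) := by
          gcongr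
          · exact (norm_nonneg _).trans (hM a)
          · exact hM a
      _ = _ := by ring
  calc _ = ‖((h : ℂ)⁻¹ * sin (h * z) - z) + (h : ℂ)⁻¹ * (w a * exp (-a))‖ := by
        rw [hsin]; ring_nf
    _ ≤ _ := (norm_add_le _ _).trans (add_le_add (norm_inv_mul_sin_mul_sub_le hh hz) hperturb)

end Complex

open Complex in
theorem approx_identity_sin_plus_bounded_general
    (w : ℂ → ℂ) (hwb : ∃ M : ℝ, ∀ z, ‖w z‖ ≤ M)
    (ρ : ℂ → ℂ) (hρ : ∀ z, ρ z = Complex.sin z + w z * Complex.exp (-z))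
    (K : Set ℂ) (hK : IsCompact K) (ε : ℝ) (hε : 0 < ε) :
    ∃ (h : ℝ), 0 < h ∧ ∃ k : ℕ, ∀ z ∈ K,
      ‖(1 / (h : ℂ)) * ρ ((h : ℂ) * z + 2 * Real.pi * (k : ℂ)) - z‖ < ε := by
  obtain ⟨M, hM⟩ := hwb
  obtain ⟨R, -, hKR⟩ := hK.isBounded.subset_closedBall_lt 0 0
  have hsmall : ∀ᶠ h in 𝓝 (0 : ℝ), h * R < 1 ∧ h * R ^ 2 < ε / 2 :=
    ((continuous_mul_const R).tendsto' 0 0 (zero_mul R) |>.eventually (gt_mem_nhds one_pos)).and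
      ((continuous_mul_const (R ^ 2)).tendsto' 0 0 (zero_mul _) |>.eventually
        (gt_mem_nhds (half_pos hε)))
  obtain ⟨h, ⟨hhR, hhε⟩, hh⟩ :=
    ((hsmall.filter_mono nhdsWithin_le_nhds).and (self_mem_nhdsWithin (s := Set.Ioi 0))).exists
  obtain ⟨k, hk⟩ : ∃ k : ℕ, M / h * Real.exp (h * R) * Real.exp (-(2 * π * k)) < ε / 2 := by
    have hdecay : Tendsto (fun k : ℕ => Real.exp (-(2 * π * k))) atTop (𝓝 0) :=
      Real.tendsto_exp_neg_atTop_nhds_zero.comp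
        (tendsto_natCast_atTop_atTop.const_mul_atTop two_pi_pos)
    exact ((hdecay.const_mul (M / h * Real.exp (h * R))).eventually
      (gt_mem_nhds (by simpa using half_pos hε))).exists
  refine ⟨h, hh, k, fun z hz => ?_⟩
  have hzR : ‖z‖ ≤ R := by simpa using hKR hz
  have hM0 : 0 ≤ M := (norm_nonneg _).trans (hM 0)
  rw [hρ, one_div]
  calc _ ≤ h * ‖z‖ ^ 2 + M / h * Real.exp (h * ‖z‖) * Real.exp (-(2 * π * k)) :=
        norm_inv_mul_sin_add_mul_exp_neg_sub_le hM hh (by nlinarith) k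
    _ ≤ h * R ^ 2 + M / h * Real.exp (h * R) * Real.exp (-(2 * π * k)) := by gcongr
    _ < ε := by linarith

open Complex in
/-- for ρ(z) = sin z + w(z)·exp(−z) with w continuous and bounded, the identity
is uniformly approximated on compacts by z ↦ (1/h)·ρ(hz + 2πk). -/
theorem approx_identity_sin_plus_bounded
    (w : ℂ → ℂ) (hw : Continuous w) (hwb : ∃ M : ℝ, ∀ z, ‖w z‖ ≤ M)
    (ρ : ℂ → ℂ) (hρ : ∀ z, ρ z = Complex.sin z + w z * Complex.exp (-z))
    (K : Set ℂ) (hK : IsCompact K) (ε : ℝ) (hε : 0 < ε) :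
    ∃ (h : ℝ), 0 < h ∧ ∃ k : ℕ, ∀ z ∈ K,
      ‖(1 / (h : ℂ)) * ρ ((h : ℂ) * z + 2 * Real.pi * (k : ℂ)) - z‖ < ε :=
  approx_identity_sin_plus_bounded_general w hwb ρ hρ K hK ε hε
end
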